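/- A context x ∈ ℝ^d cannot be weakly attacked into pulling a* if and only if there exists an arm a ≠ a* such that X_{a*}x = 0, X_a x = 0, and α_{a*}‖x‖_{V_{a*}⁻¹} ≤ α_a‖x‖_{V_a⁻¹}. -/

import Mathlib

open Matrix

/-- The regularized Gram matrix `V = XᵀX + λI`. -/
noncomputable def Vmat {m d : ℕ} (lam : ℝ) (X : Matrix (Fin m) (Fin d) ℝ) :
    Matrix (Fin d) (Fin d) ℝ :=
  Xᵀ * X + lam • (1 : Matrix (Fin d) (Fin d) ℝ)

/-- The Mahalanobis norm `‖x‖_{V⁻¹} = √(xᵀ V⁻¹ x)`. -/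
noncomputable def mahNorm {d : ℕ} (V : Matrix (Fin d) (Fin d) ℝ) (x : Fin d → ℝ) : ℝ :=
  Real.sqrt (x ⬝ᵥ (V⁻¹ *ᵥ x))

/-- The post-attack ridge regression estimate `θ̂ = V⁻¹ Xᵀ (y + Δ)`. -/
noncomputable def thetaHat {m d : ℕ} (lam : ℝ) (X : Matrix (Fin m) (Fin d) ℝ)
    (y Δ : Fin m → ℝ) : Fin d → ℝ :=
  (Vmat lam X)⁻¹ *ᵥ (Xᵀ *ᵥ (y + Δ))

/-- The post-attack UCB index of arm `a` at context `x`: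
`xᵀ θ̂_a(Δ_a) + α_a ‖x‖_{V_a⁻¹}`. -/
noncomputable def ucbIndex {K d : ℕ} (lam : ℝ) (m : Fin K → ℕ)
    (X : ∀ a, Matrix (Fin (m a)) (Fin d) ℝ) (y : ∀ a, Fin (m a) → ℝ)
    (α : Fin K → ℝ) (Δ : ∀ a, Fin (m a) → ℝ) (x : Fin d → ℝ) (a : Fin K) : ℝ :=
  x ⬝ᵥ thetaHat lam (X a) (y a) (Δ a) + α a * mahNorm (Vmat lam (X a)) x

/-- The perturbation family `Δ` ε-strongly attacks context `x` into pulling arm `astar`. -/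
def StronglyAttacks {K d : ℕ} (lam : ℝ) (m : Fin K → ℕ)
    (X : ∀ a, Matrix (Fin (m a)) (Fin d) ℝ) (y : ∀ a, Fin (m a) → ℝ)
    (α : Fin K → ℝ) (astar : Fin K) (ε : ℝ)
    (Δ : ∀ a, Fin (m a) → ℝ) (x : Fin d → ℝ) : Prop :=
  ∀ a : Fin K, a ≠ astar →
    ucbIndex lam m X y α Δ x astar ≥ ε + ucbIndex lam m X y α Δ x a

/-- The perturbation family `Δ` weakly attacks context `x` into pulling arm `astar`. -/
def WeaklyAttacks {K d : ℕ} (lam : ℝ) (m : Fin K → ℕ)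
    (X : ∀ a, Matrix (Fin (m a)) (Fin d) ℝ) (y : ∀ a, Fin (m a) → ℝ)
    (α : Fin K → ℝ) (astar : Fin K)
    (Δ : ∀ a, Fin (m a) → ℝ) (x : Fin d → ℝ) : Prop :=
  ∀ a : Fin K, a ≠ astar →
    ucbIndex lam m X y α Δ x astar > ucbIndex lam m X y α Δ x a

/-!
Writing `w = X V⁻¹ x`, the estimated reward `xᵀθ̂(Δ) = w ⬝ (y + Δ)` is affine in `Δ`, and
`w = 0` exactly when `X x = 0`. So each arm's index is either frozen at its exploration bonus
(when `X_a x = 0`) or can be moved to any real value, independently of the other arms.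
-/

theorem exists_forall_lt_iff_of_const_or_surjective {ι : Type*} [Finite ι] {D : ι → Type*}
    [∀ i, Nonempty (D i)] (u : ∀ i, D i → ℝ) (p : ι → Prop) (c : ι → ℝ)
    (hconst : ∀ i, p i → ∀ δ, u i δ = c i) (hsurj : ∀ i, ¬ p i → (u i).Surjective) (i₀ : ι) :
    (∃ δ : ∀ i, D i, ∀ i ≠ i₀, u i (δ i) < u i₀ (δ i₀)) ↔
      ¬ ∃ i ≠ i₀, p i₀ ∧ p i ∧ c i₀ ≤ c i := by
  constructor
  · rintro ⟨δ, hδ⟩ ⟨i, hi, hp₀, hp, hc⟩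
    have := hδ i hi
    rw [hconst i hp, hconst i₀ hp₀] at this
    linarith
  · classical
    intro hno
    push Not at hno
    obtain ⟨T, ⟨δ₀, hδ₀⟩, hT⟩ : ∃ T, (∃ δ₀, u i₀ δ₀ = T) ∧ ∀ i ≠ i₀, p i → c i < T := by
      by_cases hp₀ : p i₀
      · exact ⟨c i₀, ⟨Classical.arbitrary _, hconst i₀ hp₀ _⟩, fun i hi hp => hno i hi hp₀ hp⟩
      · obtain ⟨M, hM⟩ := (Set.finite_range c).bddAbove
        refine ⟨M + 1, hsurj i₀ hp₀ (M + 1), fun i _ _ => ?_⟩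
        linarith [hM (Set.mem_range_self i)]
    have hbelow : ∀ i, ∃ δ : D i, i ≠ i₀ → u i δ < T := by
      intro i
      by_cases hp : p i
      · exact ⟨Classical.arbitrary _, fun hi => (hconst i hp _).trans_lt (hT i hi hp)⟩
      · obtain ⟨δ, hδ⟩ := hsurj i hp (T - 1)
        exact ⟨δ, fun _ => by linarith⟩
    choose δ hδ using hbelow
    refine ⟨Function.update δ i₀ δ₀, fun i hi => ?_⟩
    rw [Function.update_self, Function.update_of_ne hi, hδ₀]
    exact hδ i hi

theorem Matrix.dotProduct_surjective {n : Type*} [Fintype n] {w : n → ℝ} (hw : w ≠ 0) :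
    Function.Surjective (w ⬝ᵥ ·) := by
  have hpos : 0 < w ⬝ᵥ w := by simpa using dotProduct_self_star_pos_iff.mpr hw
  intro t
  refine ⟨(t / (w ⬝ᵥ w)) • w, ?_⟩
  dsimp only
  rw [dotProduct_smul, smul_eq_mul, div_mul_cancel₀ _ hpos.ne']

section Ridge

variable {m d : ℕ} (lam : ℝ) (X : Matrix (Fin m) (Fin d) ℝ)

theorem Vmat_transpose : (Vmat lam X)ᵀ = Vmat lam X := by
  simp [Vmat, transpose_add, transpose_mul, transpose_smul]

theorem Vmat_posDef (hlam : 0 < lam) : (Vmat lam X).PosDef := by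
  have hgram : (Xᵀ * X).PosSemidef := by simpa using posSemidef_conjTranspose_mul_self X
  exact PosDef.posSemidef_add hgram (PosDef.one.smul hlam)

theorem isUnit_det_Vmat (hlam : 0 < lam) : IsUnit (Vmat lam X).det :=
  (isUnit_iff_isUnit_det _).mp (Vmat_posDef lam X hlam).isUnit

theorem Vmat_mulVec (v : Fin d → ℝ) : Vmat lam X *ᵥ v = Xᵀ *ᵥ (X *ᵥ v) + lam • v := by
  simp [Vmat, add_mulVec, mulVec_mulVec, smul_mulVec]

theorem dotProduct_thetaHat (y Δ : Fin m → ℝ) (x : Fin d → ℝ) :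
    x ⬝ᵥ thetaHat lam X y Δ = (X *ᵥ ((Vmat lam X)⁻¹ *ᵥ x)) ⬝ᵥ (y + Δ) := by
  have hsymm : x ᵥ* (Vmat lam X)⁻¹ = (Vmat lam X)⁻¹ *ᵥ x := by
    rw [← vecMul_transpose, transpose_nonsing_inv, Vmat_transpose]
  rw [thetaHat, dotProduct_mulVec, dotProduct_mulVec, hsymm, vecMul_transpose]

variable {lam X}

theorem mulVec_inv_Vmat_mulVec_eq_zero_iff (hlam : 0 < lam) (x : Fin d → ℝ) :
    X *ᵥ ((Vmat lam X)⁻¹ *ᵥ x) = 0 ↔ X *ᵥ x = 0 := by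
  have hu := isUnit_det_Vmat lam X hlam
  constructor
  · intro h
    have hx : x = lam • ((Vmat lam X)⁻¹ *ᵥ x) := by
      have hV := Vmat_mulVec lam X ((Vmat lam X)⁻¹ *ᵥ x)
      rw [mulVec_mulVec, mul_nonsing_inv _ hu, one_mulVec, h] at hV
      simpa using hV
    rw [hx, mulVec_smul, h, smul_zero]
  · intro h
    -- `V x = λ x`, hence `V⁻¹ x = λ⁻¹ x`
    have hx : (Vmat lam X)⁻¹ *ᵥ x = lam⁻¹ • x := by
      have hV : (Vmat lam X)⁻¹ *ᵥ (Vmat lam X *ᵥ x) = x := by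
        rw [mulVec_mulVec, nonsing_inv_mul _ hu, one_mulVec]
      rw [Vmat_mulVec, h, mulVec_zero, zero_add, mulVec_smul] at hV
      rwa [eq_inv_smul_iff₀ hlam.ne']
    rw [hx, mulVec_smul, h, smul_zero]

theorem dotProduct_thetaHat_of_mulVec_eq_zero (hlam : 0 < lam) {x : Fin d → ℝ}
    (hx : X *ᵥ x = 0) (y Δ : Fin m → ℝ) : x ⬝ᵥ thetaHat lam X y Δ = 0 := by
  rw [dotProduct_thetaHat, (mulVec_inv_Vmat_mulVec_eq_zero_iff hlam x).mpr hx, zero_dotProduct]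

theorem surjective_dotProduct_thetaHat (hlam : 0 < lam) {x : Fin d → ℝ} (hx : X *ᵥ x ≠ 0)
    (y : Fin m → ℝ) : Function.Surjective (fun Δ => x ⬝ᵥ thetaHat lam X y Δ) := by
  have hw : X *ᵥ ((Vmat lam X)⁻¹ *ᵥ x) ≠ 0 :=
    (mulVec_inv_Vmat_mulVec_eq_zero_iff hlam x).not.mpr hx
  have hcomp : (fun Δ => x ⬝ᵥ thetaHat lam X y Δ) = (_ ⬝ᵥ ·) ∘ (y + ·) :=
    funext fun Δ => dotProduct_thetaHat lam X y Δ x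
  rw [hcomp]
  exact (dotProduct_surjective hw).comp (add_left_surjective y)

end Ridge

theorem cannot_weakly_attack_iff_general {K d : ℕ}
    (lam : ℝ) (hlam : 0 < lam) (m : Fin K → ℕ)
    (X : ∀ a, Matrix (Fin (m a)) (Fin d) ℝ) (y : ∀ a, Fin (m a) → ℝ)
    (α : Fin K → ℝ) (astar : Fin K) (x : Fin d → ℝ) :
    (¬ ∃ Δ : ∀ a, Fin (m a) → ℝ, WeaklyAttacks lam m X y α astar Δ x) ↔
      ∃ a : Fin K, a ≠ astar ∧ X astar *ᵥ x = 0 ∧ X a *ᵥ x = 0 ∧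
        α astar * mahNorm (Vmat lam (X astar)) x
          ≤ α a * mahNorm (Vmat lam (X a)) x := by
  set bonus : Fin K → ℝ := fun a => α a * mahNorm (Vmat lam (X a)) x
  refine Iff.not_left (exists_forall_lt_iff_of_const_or_surjective
    (fun a Δa => x ⬝ᵥ thetaHat lam (X a) (y a) Δa + bonus a) (fun a => X a *ᵥ x = 0) bonus
    (fun a ha Δa => ?_) (fun a ha => ?_) astar)
  · rw [dotProduct_thetaHat_of_mulVec_eq_zero hlam ha, zero_add]
  · exact (add_right_surjective (bonus a)).comp (surjective_dotProduct_thetaHat hlam ha (y a))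

/-- A context `x` cannot be weakly attacked into pulling `a*` iff some non-target arm
`a` satisfies `X_{a*}x = 0`, `X_a x = 0` and `α_{a*}‖x‖_{V_{a*}⁻¹} ≤ α_a‖x‖_{V_a⁻¹}`. -/
theorem cannot_weakly_attack_iff {K d : ℕ} (hK : 2 ≤ K) (hd : 1 ≤ d)
    (lam : ℝ) (hlam : 0 < lam) (m : Fin K → ℕ)
    (X : ∀ a, Matrix (Fin (m a)) (Fin d) ℝ) (y : ∀ a, Fin (m a) → ℝ)
    (α : Fin K → ℝ) (astar : Fin K) (x : Fin d → ℝ) :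
    (¬ ∃ Δ : ∀ a, Fin (m a) → ℝ, WeaklyAttacks lam m X y α astar Δ x) ↔
      ∃ a : Fin K, a ≠ astar ∧ X astar *ᵥ x = 0 ∧ X a *ᵥ x = 0 ∧
        α astar * mahNorm (Vmat lam (X astar)) x
          ≤ α a * mahNorm (Vmat lam (X a)) x :=
  cannot_weakly_attack_iff_general lam hlam m X y α astar x
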